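/- Let Σ be an n×n Hermitian positive semidefinite matrix and λ > 0 a real number such that Σ ≥ (Σ + I)(Σ + (2+λ²)I)⁻¹(Σ + I). Then for any matrix G₁₁ ∈ ℂ^{n×n}, the block matrix [[G₁₁ Σ G₁₁†, -G₁₁(Σ+I)],[-(Σ+I)G₁₁†, Σ + (2+λ²)I]] is positive semidefinite. -/

import Mathlib

open Matrix
open scoped ComplexOrder

/-- Matrix-algebra core of Lemma 3: under Σ ≥ (Σ+I)(Σ+(2+λ²)I)⁻¹(Σ+I), the block matrix
[[G₁₁ΣG₁₁ᴴ, -G₁₁(Σ+I)], [-(Σ+I)G₁₁ᴴ, Σ+(2+λ²)I]] is positive semidefinite. -/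
theorem stmt0 {n : ℕ} (S : Matrix (Fin n) (Fin n) ℂ) (hS : S.PosSemidef)
    (l : ℝ) (hl : 0 < l)
    (hineq : (S - (S + 1) * (S + ((2 + l ^ 2 : ℝ) : ℂ) • 1)⁻¹ * (S + 1)).PosSemidef)
    (G : Matrix (Fin n) (Fin n) ℂ) :
    (Matrix.fromBlocks (G * S * Gᴴ) (-(G * (S + 1)))
      (-((S + 1) * Gᴴ)) (S + ((2 + l ^ 2 : ℝ) : ℂ) • 1)).PosSemidef := by
  set c : ℂ := ((2 + l ^ 2 : ℝ) : ℂ) with hc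
  have hcpos : (0 : ℂ) < c := by
    rw [hc]
    norm_cast
    positivity
  have hone : ((c • 1 : Matrix (Fin n) (Fin n) ℂ)).PosDef := by
    rw [smul_one_eq_diagonal]
    exact posDef_diagonal_iff.mpr fun _ => hcpos
  have hD : (S + c • 1).PosDef := Matrix.PosDef.posSemidef_add hS hone
  have : Invertible (S + c • 1) := hD.isUnit.invertible
  have hBH : (-(G * (S + 1)))ᴴ = -((S + 1) * Gᴴ) := by
    simp [conjTranspose_mul, conjTranspose_add, hS.isHermitian.eq]
  rw [← hBH, PosDef.fromBlocks₂₂ _ _ hD]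
  have key : G * S * Gᴴ - -(G * (S + 1)) * (S + c • 1)⁻¹ * (-(G * (S + 1)))ᴴ
      = G * (S - (S + 1) * (S + c • 1)⁻¹ * (S + 1)) * Gᴴ := by
    rw [hBH]
    noncomm_ring
  rw [key]
  exact hineq.mul_mul_conjTranspose_same G
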